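/- arXiv:2306.12254 — 3 statements merged into one kernel-verified Lean document; each statement's English description precedes it below -/
import Mathlib

section
/- Let α, β, γ, ε₀, μ₀ > 0, σ₀(ω) := ω√(ε₀μ₀), and ρ(ω) := √(1 + α/(ε₀(1 − βω² − iγω))) (principal branch). Then σ₀(ω)·Im(ρ(ω)) → 0 as ω → +∞. -/
open Filter Topology

/-- The frequency-dependent contrast `ρ(ω) = √(1 + α/(ε₀(1 − βω² − iγω)))`
(principal branch of the square root). -/
noncomputable def drudeContrast (α β γ ε₀ : ℝ) (ω : ℝ) : ℂ :=
  ((1 : ℂ) + (α : ℂ) / ((ε₀ : ℂ) * (1 - (β : ℂ) * (ω : ℂ) ^ 2 - Complex.I * (γ : ℂ) * (ω : ℂ)))) ^ ((1 : ℂ) / 2)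

lemma re_cpow_half_nonneg (z : ℂ) : 0 ≤ (z ^ ((1:ℂ)/2)).re := by
  rcases eq_or_ne z 0 with h | h
  · simp [h, Complex.zero_cpow (by norm_num : (1:ℂ)/2 ≠ 0)]
  · rw [Complex.cpow_def_of_ne_zero h, Complex.exp_re]
    apply mul_nonneg (Real.exp_pos _).le
    apply Real.cos_nonneg_of_mem_Icc
    have h1 := Complex.neg_pi_lt_arg z
    have h2 := Complex.arg_le_pi z
    have him : (Complex.log z * ((1:ℂ)/2)).im = z.arg / 2 := by
      simp [Complex.mul_im, Complex.log_im]
      ring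
    rw [him]
    constructor <;> [linarith [Real.pi_pos]; linarith]

theorem sigma_mul_im_contrast_tendsto_zero
    (α β γ ε₀ μ₀ : ℝ) (hα : 0 < α) (hβ : 0 < β) (hγ : 0 < γ) (hε₀ : 0 < ε₀) (hμ₀ : 0 < μ₀) :
    Tendsto (fun ω : ℝ => (ω * Real.sqrt (ε₀ * μ₀)) * (drudeContrast α β γ ε₀ ω).im)
      atTop (𝓝 0) := by
  set s := Real.sqrt (ε₀ * μ₀) with hs
  have hs0 : 0 ≤ s := Real.sqrt_nonneg _
  set C := s * (2 * α / (ε₀ * β)) with hCdef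
  refine squeeze_zero_norm' (a := fun ω : ℝ => C / ω) ?_ ?_
  · filter_upwards [eventually_ge_atTop
      (1 + Real.sqrt (2/β) + Real.sqrt (4*α/(ε₀*β)))] with ω hω
    have hsq1 : (0:ℝ) ≤ Real.sqrt (2/β) := Real.sqrt_nonneg _
    have hsq2 : (0:ℝ) ≤ Real.sqrt (4*α/(ε₀*β)) := Real.sqrt_nonneg _
    have h1 : 1 ≤ ω := by linarith
    have hω0 : 0 < ω := by linarith
    have hb : 2 ≤ β * ω^2 := by
      have h2 : Real.sqrt (2/β) ≤ ω := by linarith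
      have : (Real.sqrt (2/β))^2 ≤ ω^2 := by nlinarith
      rw [Real.sq_sqrt (by positivity)] at this
      rw [div_le_iff₀ hβ] at this
      linarith
    have hb2 : 4 * α ≤ ε₀ * β * ω^2 := by
      have h3 : Real.sqrt (4*α/(ε₀*β)) ≤ ω := by linarith
      have : (Real.sqrt (4*α/(ε₀*β)))^2 ≤ ω^2 := by nlinarith
      rw [Real.sq_sqrt (by positivity)] at this
      rw [div_le_iff₀ (by positivity)] at this
      linarith
    set w : ℂ := 1 - (β:ℂ) * (ω:ℂ)^2 - Complex.I * (γ:ℂ) * (ω:ℂ) with hwdef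
    have hwre : w.re = 1 - β * ω^2 := by
      rw [hwdef]
      push_cast
      simp [Complex.sub_re, Complex.mul_re, pow_two]
    have hwnorm : β * ω^2 / 2 ≤ ‖w‖ := by
      calc β * ω^2 / 2 ≤ β * ω^2 - 1 := by linarith
        _ = |w.re| := by rw [hwre, abs_of_nonpos (by linarith)]; ring
        _ ≤ ‖w‖ := Complex.abs_re_le_norm w
    have hw0 : w ≠ 0 := by
      intro h
      rw [h, norm_zero] at hwnorm
      nlinarith
    set z : ℂ := 1 + (α:ℂ) / ((ε₀:ℂ) * w) with hzdef
    have hz1 : ‖z - 1‖ ≤ 2 * α / (ε₀ * β * ω^2) := by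
      have e1 : z - 1 = (α:ℂ) / ((ε₀:ℂ) * w) := by ring
      rw [e1, norm_div, norm_mul, Complex.norm_real, Complex.norm_real, Real.norm_eq_abs, Real.norm_eq_abs,
        abs_of_pos hα, abs_of_pos hε₀]
      have e2 : 2 * α / (ε₀ * β * ω^2) = α / (ε₀ * (β * ω^2 / 2)) := by
        field_simp
      rw [e2]
      gcongr
    have hz1' : ‖z - 1‖ ≤ 1/2 := by
      refine hz1.trans ?_
      rw [div_le_div_iff₀ (by positivity) (by norm_num)]
      nlinarith
    have hz0 : z ≠ 0 := by
      intro h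
      rw [h] at hz1'
      norm_num at hz1'
    set ρ : ℂ := z ^ ((1:ℂ)/2) with hρdef
    have hρsq : ρ * ρ = z := by
      rw [hρdef, ← Complex.cpow_add _ _ hz0]
      norm_num
    have hρre : 0 ≤ ρ.re := re_cpow_half_nonneg z
    have hρ1 : 1 ≤ ‖ρ + 1‖ := by
      have : (1:ℝ) ≤ (ρ + 1).re := by
        simp only [Complex.add_re, Complex.one_re]; linarith
      exact this.trans (Complex.re_le_norm _)
    have hkey : ‖ρ - 1‖ ≤ ‖z - 1‖ := by
      have hmul : ‖ρ - 1‖ * ‖ρ + 1‖ = ‖z - 1‖ := by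
        rw [← norm_mul]; congr 1; rw [← hρsq]; ring
      calc ‖ρ - 1‖ = ‖ρ - 1‖ * 1 := (mul_one _).symm
        _ ≤ ‖ρ - 1‖ * ‖ρ + 1‖ := by
            exact mul_le_mul_of_nonneg_left hρ1 (norm_nonneg _)
        _ = ‖z - 1‖ := hmul
    have him : |ρ.im| ≤ 2 * α / (ε₀ * β * ω^2) := by
      have e : |ρ.im| = |(ρ - 1).im| := by simp
      rw [e]
      exact ((Complex.abs_im_le_norm _).trans hkey).trans hz1
    have hdc : drudeContrast α β γ ε₀ ω = ρ := rfl
    rw [hdc, Real.norm_eq_abs, abs_mul, abs_mul, abs_of_pos hω0, abs_of_nonneg hs0]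
    calc ω * s * |ρ.im| ≤ ω * s * (2 * α / (ε₀ * β * ω^2)) := by
          exact mul_le_mul_of_nonneg_left him (by positivity)
      _ = C / ω := by
          rw [hCdef]; field_simp
  · exact tendsto_const_nhds.div_atTop tendsto_id
end

section
/- Define ℒ₁(ω) := cos(σ₀)cos(σ₀ρ₁)cosh(σ₀ρ₂) − (sin σ₀/(2(ρ₁²+ρ₂²)))·[ρ₁(1+ρ₁²+ρ₂²)sin(σ₀ρ₁)cosh(σ₀ρ₂) − ρ₂(ρ₁²+ρ₂²−1)cos(σ₀ρ₁)sinh(σ₀ρ₂)], where ρ₁ = Re ρ(ω), ρ₂ = Im ρ(ω), σ₀ = ω√(ε₀μ₀), with Drude–Lorentz contrast ρ(ω) for parameters α, β, γ, ε₀, μ₀ > 0. Then limsup_{ω→∞} |ℒ₁(ω)| ≤ 1. -/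
open Filter Topology

/-- The real-part function `ℒ₁(ω)` arising from the split of the dispersion relation. -/
noncomputable def scriptL1 (α β γ ε₀ μ₀ : ℝ) (ω : ℝ) : ℝ :=
  let σ₀ := ω * Real.sqrt (ε₀ * μ₀)
  let ρ₁ := (drudeContrast α β γ ε₀ ω).re
  let ρ₂ := (drudeContrast α β γ ε₀ ω).im
  Real.cos σ₀ * Real.cos (σ₀ * ρ₁) * Real.cosh (σ₀ * ρ₂) -
    (Real.sin σ₀ / (2 * (ρ₁ ^ 2 + ρ₂ ^ 2))) *
      (ρ₁ * (1 + ρ₁ ^ 2 + ρ₂ ^ 2) * Real.sin (σ₀ * ρ₁) * Real.cosh (σ₀ * ρ₂) -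
        ρ₂ * (ρ₁ ^ 2 + ρ₂ ^ 2 - 1) * Real.cos (σ₀ * ρ₁) * Real.sinh (σ₀ * ρ₂))

/-- `|x| + |y| ≤ max |x+y| |x-y|`. -/
lemma aux_abs_add_abs_le_max (x y : ℝ) : |x| + |y| ≤ max |x + y| |x - y| := by
  rcases le_total 0 x with hx | hx <;> rcases le_total 0 y with hy | hy
  · exact le_max_iff.mpr (Or.inl (le_of_eq (by
      rw [abs_of_nonneg hx, abs_of_nonneg hy, abs_of_nonneg (add_nonneg hx hy)])))
  · exact le_max_iff.mpr (Or.inr (le_of_eq (by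
      rw [abs_of_nonneg hx, abs_of_nonpos hy, abs_of_nonneg (by linarith)]; ring)))
  · exact le_max_iff.mpr (Or.inr (le_of_eq (by
      rw [abs_of_nonpos hx, abs_of_nonneg hy, abs_of_nonpos (by linarith)]; ring)))
  · exact le_max_iff.mpr (Or.inl (le_of_eq (by
      rw [abs_of_nonpos hx, abs_of_nonpos hy, abs_of_nonpos (by linarith)]; ring)))

/-- `|cos a cos b| + |sin a sin b| ≤ 1`. -/
lemma aux_trig (a b : ℝ) :
    |Real.cos a * Real.cos b| + |Real.sin a * Real.sin b| ≤ 1 := by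
  have h := aux_abs_add_abs_le_max (Real.cos a * Real.cos b) (Real.sin a * Real.sin b)
  have h1 : Real.cos a * Real.cos b + Real.sin a * Real.sin b = Real.cos (a - b) :=
    (Real.cos_sub a b).symm
  have h2 : Real.cos a * Real.cos b - Real.sin a * Real.sin b = Real.cos (a + b) :=
    (Real.cos_add a b).symm
  rw [h1, h2] at h
  exact h.trans (max_le (Real.abs_cos_le_one _) (Real.abs_cos_le_one _))

theorem limsup_scriptL1_le_one
    (α β γ ε₀ μ₀ : ℝ) (hα : 0 < α) (hβ : 0 < β) (hγ : 0 < γ) (hε₀ : 0 < ε₀) (hμ₀ : 0 < μ₀) :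
    Filter.limsup (fun ω : ℝ => |scriptL1 α β γ ε₀ μ₀ ω|) atTop ≤ 1 := by
  -- notation
  set D : ℝ → ℂ := fun ω => (1 : ℂ) - (β : ℂ) * (ω : ℂ) ^ 2 - Complex.I * (γ : ℂ) * (ω : ℂ) with hD
  set z : ℝ → ℂ := fun ω => (α : ℂ) / ((ε₀ : ℂ) * D ω) with hz
  set w : ℝ → ℂ := fun ω => (1 : ℂ) + z ω with hwdef
  have hρdef : ∀ ω, drudeContrast α β γ ε₀ ω = w ω ^ ((1 : ℂ)/2) := fun ω => rfl
  set r1 : ℝ → ℝ := fun ω => (drudeContrast α β γ ε₀ ω).re with hr1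
  set r2 : ℝ → ℝ := fun ω => (drudeContrast α β γ ε₀ ω).im with hr2
  set σf : ℝ → ℝ := fun ω => ω * Real.sqrt (ε₀ * μ₀) with hσf
  -- ‖D ω‖ is eventually large
  have hDre : ∀ ω : ℝ, (D ω).re = 1 - β * ω ^ 2 := by
    intro ω
    simp [hD, Complex.sub_re, Complex.mul_re, Complex.mul_im, pow_two]
  -- ‖D‖ → ∞
  have hDnorm : Tendsto (fun ω => ‖D ω‖) atTop atTop := by
    apply tendsto_atTop_mono' atTop (show ∀ᶠ ω in atTop, β * ω ^ 2 - 1 ≤ ‖D ω‖ from ?_)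
    · have h1 : Tendsto (fun ω : ℝ => β * ω ^ 2 - 1) atTop atTop := by
        apply Filter.tendsto_atTop_add_const_right
        exact (tendsto_pow_atTop (two_ne_zero)).const_mul_atTop hβ
      exact h1
    · filter_upwards with ω
      have h2 : |(D ω).re| ≤ ‖D ω‖ := Complex.abs_re_le_norm _
      rw [hDre ω] at h2
      have : β * ω ^ 2 - 1 ≤ |1 - β * ω ^ 2| := by
        rw [abs_sub_comm]; exact le_abs_self _
      linarith [this.trans h2]
  -- z → 0
  have hznorm : ∀ ω, ‖z ω‖ = α / (ε₀ * ‖D ω‖) := by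
    intro ω
    simp [hz, norm_div, norm_mul, Complex.norm_real, Real.norm_eq_abs, abs_of_pos hα, abs_of_pos hε₀]
  have hz0 : Tendsto z atTop (𝓝 0) := by
    rw [tendsto_zero_iff_norm_tendsto_zero]
    have : Tendsto (fun ω => α / (ε₀ * ‖D ω‖)) atTop (𝓝 0) :=
      Tendsto.div_atTop tendsto_const_nhds (hDnorm.const_mul_atTop hε₀)
    refine this.congr fun ω => ?_
    rw [hznorm]
  -- w → 1
  have hw1 : Tendsto w atTop (𝓝 1) := by
    have := hz0.const_add (1 : ℂ)
    simpa using this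
  -- ρ → 1
  have hρ : Tendsto (fun ω => drudeContrast α β γ ε₀ ω) atTop (𝓝 1) := by
    have hc : ContinuousAt (fun x : ℂ => x ^ ((1 : ℂ)/2)) 1 :=
      continuousAt_cpow_const (Complex.mem_slitPlane_iff.mpr (Or.inl (by norm_num)))
    have := hc.tendsto.comp hw1
    simpa [hρdef, Complex.one_cpow, Function.comp_def] using this
  have hρ1 : Tendsto r1 atTop (𝓝 1) := by
    have := (Complex.continuous_re.tendsto 1).comp hρ
    simpa [Function.comp_def] using this
  have hρ2 : Tendsto r2 atTop (𝓝 0) := by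
    have := (Complex.continuous_im.tendsto 1).comp hρ
    simpa [Function.comp_def] using this
  -- σ₀ * ρ₂ → 0
  have hσρ2 : Tendsto (fun ω => σf ω * r2 ω) atTop (𝓝 0) := by
    set C : ℝ := 2 * Real.sqrt (ε₀ * μ₀) * α / (ε₀ * β) with hC
    have hbound : ∀ᶠ ω in atTop, |σf ω * r2 ω| ≤ C / ω := by
      filter_upwards [hρ1.eventually (eventually_ge_nhds (by norm_num : (1:ℝ)/2 < 1)),
        hw1.eventually (eventually_ne_nhds (one_ne_zero)),
        eventually_ge_atTop (max 1 (Real.sqrt (2/β)))] with ω h12 hwne hM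
      have hω1 : (1 : ℝ) ≤ ω := le_trans (le_max_left _ _) hM
      have hω0 : 0 < ω := lt_of_lt_of_le one_pos hω1
      have hβω : 2 ≤ β * ω ^ 2 := by
        have h1 : Real.sqrt (2/β) ≤ ω := le_trans (le_max_right _ _) hM
        have h2 : 2/β ≤ ω ^ 2 := by
          have := Real.sq_sqrt (le_of_lt (div_pos two_pos hβ))
          calc 2/β = Real.sqrt (2/β) ^ 2 := this.symm
            _ ≤ ω ^ 2 := by
              apply pow_le_pow_left₀ (Real.sqrt_nonneg _) h1
        rw [div_le_iff₀ hβ] at h2; linarith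
      -- square relation
      have hsq : drudeContrast α β γ ε₀ ω * drudeContrast α β γ ε₀ ω = w ω := by
        rw [hρdef, ← Complex.cpow_add _ _ hwne]
        norm_num
      have him : (w ω).im = 2 * r1 ω * r2 ω := by
        conv_lhs => rw [← hsq]
        rw [Complex.mul_im, hr1, hr2]; ring
      have himz : (w ω).im = (z ω).im := by simp [hwdef]
      -- |im z| ≤ ‖z‖ ≤ 2α/(ε₀βω²)
      have hDlow : β * ω ^ 2 / 2 ≤ ‖D ω‖ := by
        have h2 : |(D ω).re| ≤ ‖D ω‖ := Complex.abs_re_le_norm _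
        rw [hDre ω] at h2
        have : β * ω ^ 2 - 1 ≤ |1 - β * ω ^ 2| := by
          rw [abs_sub_comm]; exact le_abs_self _
        nlinarith [this.trans h2]
      have hzb : ‖z ω‖ ≤ 2 * α / (ε₀ * (β * ω ^ 2)) := by
        rw [hznorm]
        have hpos : 0 < ε₀ * (β * ω ^ 2 / 2) := by positivity
        have h1 : α / (ε₀ * ‖D ω‖) ≤ α / (ε₀ * (β * ω ^ 2 / 2)) :=
          div_le_div_of_nonneg_left hα.le hpos
            (by apply mul_le_mul_of_nonneg_left hDlow hε₀.le)
        calc α / (ε₀ * ‖D ω‖) ≤ α / (ε₀ * (β * ω ^ 2 / 2)) := h1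
          _ = 2 * α / (ε₀ * (β * ω ^ 2)) := by
            field_simp
      have hr2b : |r2 ω| ≤ ‖z ω‖ := by
        have h1 : |(z ω).im| ≤ ‖z ω‖ := Complex.abs_im_le_norm _
        rw [← himz, him] at h1
        have h2 : |r2 ω| ≤ |2 * r1 ω * r2 ω| := by
          rw [abs_mul]
          have : 1 ≤ |2 * r1 ω| := by
            rw [abs_of_nonneg (by linarith)]; linarith
          nlinarith [abs_nonneg (r2 ω)]
        exact h2.trans h1
      -- assemble
      have hσpos : 0 ≤ σf ω := by
        apply mul_nonneg hω0.le (Real.sqrt_nonneg _)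
      rw [abs_mul, abs_of_nonneg hσpos]
      calc σf ω * |r2 ω| ≤ σf ω * (2 * α / (ε₀ * (β * ω ^ 2))) := by
            apply mul_le_mul_of_nonneg_left (hr2b.trans hzb) hσpos
        _ = C / ω := by
            rw [hσf, hC]; field_simp
    have hCω : Tendsto (fun ω : ℝ => C / ω) atTop (𝓝 0) :=
      Tendsto.div_atTop tendsto_const_nhds tendsto_id
    have hneg : Tendsto (fun ω : ℝ => -(C / ω)) atTop (𝓝 0) := by
      simpa using hCω.neg
    apply tendsto_of_tendsto_of_tendsto_of_le_of_le' hneg hCω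
    · filter_upwards [hbound] with ω h using neg_le_of_abs_le h
    · filter_upwards [hbound] with ω h using le_of_abs_le h
  -- auxiliary limit functions
  set N : ℝ → ℝ := fun ω => r1 ω ^ 2 + r2 ω ^ 2 with hNdef
  set C₁ : ℝ → ℝ := fun ω => r1 ω * (1 + N ω) / (2 * N ω) with hC₁def
  set C₂ : ℝ → ℝ := fun ω => r2 ω * (N ω - 1) / (2 * N ω) with hC₂def
  set K : ℝ → ℝ := fun ω => Real.cosh (σf ω * r2 ω) with hKdef
  set Sh : ℝ → ℝ := fun ω => Real.sinh (σf ω * r2 ω) with hShdef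
  set g : ℝ → ℝ := fun ω => K ω * max 1 (C₁ ω) + |C₂ ω * Sh ω| with hgdef
  have hN : Tendsto N atTop (𝓝 1) := by
    have := (hρ1.pow 2).add (hρ2.pow 2)
    simpa using this
  have hC₁ : Tendsto C₁ atTop (𝓝 1) := by
    have h1 : Tendsto (fun ω => r1 ω * (1 + N ω)) atTop (𝓝 (1 * (1 + 1))) :=
      hρ1.mul (tendsto_const_nhds.add hN)
    have h2 : Tendsto (fun ω => 2 * N ω) atTop (𝓝 (2 * 1)) :=
      tendsto_const_nhds.mul hN
    have := h1.div h2 (by norm_num)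
    norm_num at this
    exact this
  have hC₂ : Tendsto C₂ atTop (𝓝 0) := by
    have h1 : Tendsto (fun ω => r2 ω * (N ω - 1)) atTop (𝓝 (0 * (1 - 1))) :=
      hρ2.mul (hN.sub tendsto_const_nhds)
    have h2 : Tendsto (fun ω => 2 * N ω) atTop (𝓝 (2 * 1)) :=
      tendsto_const_nhds.mul hN
    have := h1.div h2 (by norm_num)
    norm_num at this
    exact this
  have hK : Tendsto K atTop (𝓝 1) := by
    have := (Real.continuous_cosh.tendsto 0).comp hσρ2
    simpa [hKdef, Function.comp_def] using this
  have hSh : Tendsto Sh atTop (𝓝 0) := by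
    have := (Real.continuous_sinh.tendsto 0).comp hσρ2
    simpa [hShdef, Function.comp_def] using this
  have hg : Tendsto g atTop (𝓝 1) := by
    have h1 : Tendsto (fun ω => K ω * max 1 (C₁ ω)) atTop (𝓝 (1 * max 1 1)) :=
      hK.mul (tendsto_const_nhds.max hC₁)
    have h2 : Tendsto (fun ω => |C₂ ω * Sh ω|) atTop (𝓝 |0 * 0|) :=
      (hC₂.mul hSh).abs
    have := h1.add h2
    norm_num at this
    simpa [hgdef, abs_mul] using this
  -- eventual bound |ℒ₁| ≤ g
  have hle : ∀ᶠ ω in atTop, |scriptL1 α β γ ε₀ μ₀ ω| ≤ g ω := by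
    filter_upwards [hρ1.eventually (eventually_ge_nhds (by norm_num : (1:ℝ)/2 < 1))] with ω h12
    have hNω : N ω = r1 ω ^ 2 + r2 ω ^ 2 := rfl
    have hNpos : 0 < N ω := by
      rw [hNω]; nlinarith [sq_nonneg (r2 ω)]
    set a := σf ω with ha
    set b := σf ω * r1 ω with hb
    have hKpos : (1 : ℝ) ≤ K ω := Real.one_le_cosh _
    have hC₁ω : C₁ ω = r1 ω * (1 + N ω) / (2 * N ω) := rfl
    have hC₁nn : 0 ≤ C₁ ω := by
      rw [hC₁ω]
      apply div_nonneg _ (by linarith)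
      nlinarith
    have hN0 : (drudeContrast α β γ ε₀ ω).re ^ 2 + (drudeContrast α β γ ε₀ ω).im ^ 2 ≠ 0 := by
      have := hNpos.ne'
      rw [hNω, hr1, hr2] at this
      exact this
    have hEq : scriptL1 α β γ ε₀ μ₀ ω =
        K ω * (Real.cos a * Real.cos b) - C₁ ω * K ω * (Real.sin a * Real.sin b)
          + C₂ ω * Sh ω * (Real.sin a * Real.cos b) := by
      rw [ha, hb]
      simp only [scriptL1, hC₁def, hC₂def, hKdef, hShdef, hNdef, hσf, hr1, hr2]
      field_simp
      ring
    have hgoal : |scriptL1 α β γ ε₀ μ₀ ω| ≤ K ω * max 1 (C₁ ω) + |C₂ ω * Sh ω| := ?_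
    · exact hgoal
    rw [hEq]
    have t1 : |K ω * (Real.cos a * Real.cos b) - C₁ ω * K ω * (Real.sin a * Real.sin b)
        + C₂ ω * Sh ω * (Real.sin a * Real.cos b)|
        ≤ |K ω * (Real.cos a * Real.cos b)| + |C₁ ω * K ω * (Real.sin a * Real.sin b)|
          + |C₂ ω * Sh ω * (Real.sin a * Real.cos b)| := by
      calc _ ≤ |K ω * (Real.cos a * Real.cos b) - C₁ ω * K ω * (Real.sin a * Real.sin b)|
              + |C₂ ω * Sh ω * (Real.sin a * Real.cos b)| := abs_add_le _ _
        _ ≤ _ := by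
            have := abs_sub (K ω * (Real.cos a * Real.cos b))
              (C₁ ω * K ω * (Real.sin a * Real.sin b))
            linarith
    have e1 : |K ω * (Real.cos a * Real.cos b)| = K ω * |Real.cos a * Real.cos b| := by
      rw [abs_mul, abs_of_nonneg (by linarith)]
    have e2 : |C₁ ω * K ω * (Real.sin a * Real.sin b)|
        = C₁ ω * K ω * |Real.sin a * Real.sin b| := by
      rw [abs_mul, abs_of_nonneg (mul_nonneg hC₁nn (le_trans zero_le_one hKpos))]
    have e3 : |C₂ ω * Sh ω * (Real.sin a * Real.cos b)| ≤ |C₂ ω * Sh ω| := by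
      rw [abs_mul]
      have h1 : |Real.sin a * Real.cos b| ≤ 1 := by
        rw [abs_mul]
        exact mul_le_one₀ (Real.abs_sin_le_one a) (abs_nonneg _) (Real.abs_cos_le_one b)
      exact mul_le_of_le_one_right (abs_nonneg _) h1
    have hmax1 : K ω ≤ K ω * max 1 (C₁ ω) :=
      le_mul_of_one_le_right (by linarith) (le_max_left _ _)
    have hmax2 : C₁ ω * K ω ≤ K ω * max 1 (C₁ ω) := by
      rw [mul_comm]
      exact mul_le_mul_of_nonneg_left (le_max_right _ _) (by linarith)
    have htrig := aux_trig a b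
    rw [e1, e2] at t1
    have hKnn : (0:ℝ) ≤ K ω := by linarith
    have hKmaxnn : (0:ℝ) ≤ K ω * max 1 (C₁ ω) :=
      mul_nonneg hKnn (le_trans zero_le_one (le_max_left _ _))
    linarith [mul_le_mul_of_nonneg_right hmax1 (abs_nonneg (Real.cos a * Real.cos b)),
      mul_le_mul_of_nonneg_right hmax2 (abs_nonneg (Real.sin a * Real.sin b)),
      mul_le_mul_of_nonneg_left htrig hKmaxnn]
  -- conclude via limsup
  have hcobdd : IsCoboundedUnder (· ≤ ·) atTop (fun ω : ℝ => |scriptL1 α β γ ε₀ μ₀ ω|) := by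
    apply IsBoundedUnder.isCoboundedUnder_le
    exact isBoundedUnder_of ⟨0, fun ω => abs_nonneg _⟩
  calc Filter.limsup (fun ω : ℝ => |scriptL1 α β γ ε₀ μ₀ ω|) atTop
      ≤ Filter.limsup g atTop := limsup_le_limsup hle hcobdd hg.isBoundedUnder_le
    _ = 1 := hg.limsup_eq
end

section
/- Let α, β, γ, ε₀, μ₀ > 0 and κ(ω) be any choice of Bloch parameter satisfying cos(2κ(ω)) = cos(σ₀(ω))cos(ρ(ω)σ₀(ω)) − ((1+ρ(ω)²)/(2ρ(ω)))·sin(σ₀(ω))sin(ρ(ω)σ₀(ω)), where σ₀(ω) = ω√(ε₀μ₀) and ρ(ω) = √(1 + α/(ε₀(1 − βω² − iγω))) (principal branch). Then Im κ(ω) → 0 as ω → +∞. -/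
open Filter Topology

/-- The right-hand side of the one-dimensional dispersion relation. -/
noncomputable def dispersionRHS (α β γ ε₀ μ₀ : ℝ) (ω : ℝ) : ℂ :=
  let σ₀ : ℂ := (ω * Real.sqrt (ε₀ * μ₀) : ℝ)
  let ρ : ℂ := drudeContrast α β γ ε₀ ω
  Complex.cos σ₀ * Complex.cos (ρ * σ₀) -
    ((1 + ρ ^ 2) / (2 * ρ)) * (Complex.sin σ₀ * Complex.sin (ρ * σ₀))


lemma aux_quad (u s e : ℝ) (hu0 : 0 ≤ u) (hs : 0 ≤ s) (he : 0 ≤ e)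
    (h1 : u + s ≤ (1+e)^2) (h2 : (1-u)*s ≤ e^2) : s ≤ 3*e + e^2 := by
  nlinarith [mul_nonneg hs hs, mul_nonneg he hs, mul_nonneg he he, sq_nonneg (s - e),
    mul_le_mul_of_nonneg_left h1 hs]

lemma aux_sinh_sq_le (z : ℂ) (e : ℝ) (he : 0 ≤ e)
    (him : |(Complex.cos z).im| ≤ e) (hn : ‖Complex.cos z‖ ≤ 1 + e) :
    z.im ^ 2 ≤ 3*e + e^2 := by
  set L := Complex.cos z with hL
  have h := Complex.cos_eq z
  rw [← Complex.ofReal_cos, ← Complex.ofReal_cosh, ← Complex.ofReal_sin,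
    ← Complex.ofReal_sinh, ← hL] at h
  have hre : L.re = Real.cos z.re * Real.cosh z.im := by
    rw [h]; simp [Complex.sub_re, Complex.mul_re, Complex.cos_ofReal_re, Complex.cosh_ofReal_re, Complex.sin_ofReal_re, Complex.sinh_ofReal_re]
  have him' : L.im = -(Real.sin z.re * Real.sinh z.im) := by
    rw [h]; simp [Complex.sub_im, Complex.mul_im, Complex.cos_ofReal_re, Complex.cosh_ofReal_re, Complex.sin_ofReal_re, Complex.sinh_ofReal_re]
  have hn2 : L.re^2 + L.im^2 ≤ (1+e)^2 := by
    have := Complex.sq_norm L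
    rw [Complex.normSq_apply] at this
    nlinarith [norm_nonneg L]
  have him2 : L.im^2 ≤ e^2 := by
    rw [← sq_abs]; exact pow_le_pow_left₀ (abs_nonneg _) him 2
  have pyth := Real.sin_sq_add_cos_sq z.re
  have hch := Real.cosh_sq z.im
  have key : Real.sinh z.im ^ 2 ≤ 3*e + e^2 := by
    have hid : L.re^2 + L.im^2 = Real.cos z.re^2 + Real.sinh z.im^2 := by
      rw [hre, him']
      linear_combination Real.cos z.re^2 * hch + Real.sinh z.im^2 * pyth
    have hid2 : L.im^2 = (1 - Real.cos z.re^2) * Real.sinh z.im^2 := by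
      rw [him']
      linear_combination Real.sinh z.im^2 * pyth
    apply aux_quad (Real.cos z.re ^ 2) _ e (sq_nonneg _) (sq_nonneg _) he
    · linarith
    · linarith
  have hy : z.im ^ 2 ≤ Real.sinh z.im ^ 2 := by
    have h1 : |z.im| ≤ |Real.sinh z.im| := by
      rw [Real.abs_sinh]
      rcases eq_or_lt_of_le (abs_nonneg z.im) with h | h
      · simp [← h]
      · exact (Real.self_lt_sinh_iff.mpr h).le
    calc z.im ^ 2 = |z.im|^2 := (sq_abs _).symm
    _ ≤ |Real.sinh z.im|^2 := pow_le_pow_left₀ (abs_nonneg _) h1 2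
    _ = Real.sinh z.im ^ 2 := sq_abs _
  linarith


theorem im_quasiperiodicity_tendsto_zero
    (α β γ ε₀ μ₀ : ℝ) (hα : 0 < α) (hβ : 0 < β) (hγ : 0 < γ) (hε₀ : 0 < ε₀) (hμ₀ : 0 < μ₀)
    (κ : ℝ → ℂ)
    (hκ : ∀ ω : ℝ, Complex.cos (2 * κ ω) = dispersionRHS α β γ ε₀ μ₀ ω) :
    Tendsto (fun ω : ℝ => (κ ω).im) atTop (𝓝 0) := by
  set c : ℝ := Real.sqrt (ε₀ * μ₀) with hcdef
  have hc : 0 < c := Real.sqrt_pos.mpr (mul_pos hε₀ hμ₀)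
  set σ : ℝ → ℂ := fun ω => ((ω * c : ℝ) : ℂ) with hσdef
  set w : ℝ → ℂ := fun ω =>
    (α : ℂ) / ((ε₀ : ℂ) * (1 - (β : ℂ) * (ω : ℂ) ^ 2 - Complex.I * (γ : ℂ) * (ω : ℂ))) with hwdef
  set ρ : ℝ → ℂ := fun ω => drudeContrast α β γ ε₀ ω with hρdef
  have hρw : ∀ ω, ρ ω = (1 + w ω) ^ ((1:ℂ)/2) := fun ω => rfl
  set d : ℝ → ℂ := fun ω => (ρ ω - 1) * σ ω with hddef
  set m : ℝ → ℂ := fun ω => (1 + ρ ω ^ 2) / (2 * ρ ω) with hmdef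
  set E : ℝ → ℂ := fun ω => dispersionRHS α β γ ε₀ μ₀ ω - Complex.cos (2 * σ ω) with hEdef
  set K : ℝ := 2 * α / (ε₀ * β) with hKdef
  -- Step 1 : eventual bound on |ω| * ‖w ω‖
  have hb : ∀ᶠ ω : ℝ in atTop, |ω| * ‖w ω‖ ≤ K * (1/ω) := by
    filter_upwards [eventually_ge_atTop (1:ℝ), eventually_ge_atTop (2/β)] with ω h1 h2
    have hω : (0:ℝ) < ω := lt_of_lt_of_le one_pos h1
    have hβω : 2 ≤ β * ω^2 := by
      have : 2/β ≤ ω := h2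
      have h3 : 2 ≤ β * ω := by rw [div_le_iff₀ hβ] at this; linarith [this]
      nlinarith
    set Dc : ℂ := 1 - (β : ℂ) * (ω : ℂ) ^ 2 - Complex.I * (γ : ℂ) * (ω : ℂ) with hDc
    have hDre : Dc.re = 1 - β * ω^2 := by simp [hDc, ← Complex.ofReal_pow]
    have hD : β * ω^2 / 2 ≤ ‖Dc‖ := by
      have habs := Complex.abs_re_le_norm Dc
      rw [hDre] at habs
      calc β * ω^2 / 2 ≤ β * ω^2 - 1 := by linarith
      _ ≤ |1 - β * ω^2| := by rw [abs_sub_comm]; exact le_abs_self _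
      _ ≤ _ := habs
    have hDpos : (0:ℝ) < ‖Dc‖ := lt_of_lt_of_le (by positivity) hD
    have hnw : ‖w ω‖ = α / (ε₀ * ‖Dc‖) := by
      show ‖(α : ℂ) / ((ε₀ : ℂ) * Dc)‖ = _
      rw [norm_div, norm_mul, Complex.norm_real, Complex.norm_real,
        Real.norm_eq_abs, Real.norm_eq_abs, abs_of_pos hα, abs_of_pos hε₀]
    rw [hnw, abs_of_pos hω, hKdef]
    have e1 : ω * (α / (ε₀ * ‖Dc‖)) = ω * α / (ε₀ * ‖Dc‖) := by ring
    have e2 : 2 * α / (ε₀ * β) * (1/ω) = 2 * α / (ε₀ * β * ω) := by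
      field_simp
    rw [e1, e2, div_le_div_iff₀ (by positivity) (by positivity)]
    nlinarith [mul_le_mul_of_nonneg_left hD (by positivity : (0:ℝ) ≤ 2*α*ε₀)]
  -- limit of the majorant
  have hKlim : Tendsto (fun ω : ℝ => K * (1/ω)) atTop (𝓝 0) := by
    have := (tendsto_inv_atTop_zero (𝕜 := ℝ)).const_mul K
    simpa [one_div] using this
  have hww : Tendsto (fun ω : ℝ => |ω| * ‖w ω‖) atTop (𝓝 0) :=
    squeeze_zero' (by filter_upwards with ω using by positivity) hb hKlim
  -- Step 2 : w → 0 and ρ → 1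
  have hw0 : Tendsto w atTop (𝓝 0) := by
    rw [tendsto_zero_iff_norm_tendsto_zero]
    apply squeeze_zero' (by filter_upwards with ω using norm_nonneg _) _ hww
    filter_upwards [eventually_ge_atTop (1:ℝ)] with ω h1
    have : (1:ℝ) ≤ |ω| := le_trans h1 (le_abs_self ω)
    nlinarith [norm_nonneg (w ω)]
  have hρ : Tendsto ρ atTop (𝓝 1) := by
    have hbase : Tendsto (fun ω => 1 + w ω) atTop (𝓝 1) := by
      simpa using tendsto_const_nhds.add hw0
    have h2 : Tendsto (fun ω => (1 + w ω) ^ ((1:ℂ)/2)) atTop (𝓝 ((1:ℂ) ^ ((1:ℂ)/2))) :=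
      hbase.cpow tendsto_const_nhds Complex.one_mem_slitPlane
    rw [Complex.one_cpow] at h2
    exact h2.congr fun ω => (hρw ω).symm
  -- Step 3 : eventually ρ² = 1 + w
  have hsq : ∀ᶠ ω : ℝ in atTop, ρ ω ^ 2 = 1 + w ω := by
    have hsmall : ∀ᶠ ω : ℝ in atTop, ‖w ω‖ < 1 := by
      have h0 : Tendsto (fun ω => ‖w ω‖) atTop (𝓝 0) :=
        tendsto_zero_iff_norm_tendsto_zero.mp hw0
      exact h0.eventually_lt_const (by norm_num : (0:ℝ) < 1)
    filter_upwards [hsmall] with ω hω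
    have hne : (1 : ℂ) + w ω ≠ 0 := by
      intro hcon
      have : w ω = -1 := by linear_combination hcon
      rw [this] at hω; simp at hω
    rw [hρw, sq, ← Complex.cpow_add _ _ hne]
    norm_num
  -- Step 4 : eventually ‖ρ - 1‖ ≤ ‖w‖
  have hρ1 : ∀ᶠ ω : ℝ in atTop, ‖ρ ω - 1‖ ≤ ‖w ω‖ := by
    have hclose : ∀ᶠ ω : ℝ in atTop, ‖ρ ω - 1‖ < 1 := by
      have h0 : Tendsto (fun ω => ‖ρ ω - 1‖) atTop (𝓝 0) := by
        simpa using (hρ.sub_const 1).norm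
      exact h0.eventually_lt_const (by norm_num : (0:ℝ) < 1)
    filter_upwards [hsq, hclose] with ω h2 h3
    have hfac : (ρ ω - 1) * (ρ ω + 1) = w ω := by linear_combination h2
    have hge : (1:ℝ) ≤ ‖ρ ω + 1‖ := by
      have h4 : ‖(2:ℂ)‖ ≤ ‖ρ ω + 1‖ + ‖ρ ω - 1‖ := by
        rw [show (2:ℂ) = (ρ ω + 1) - (ρ ω - 1) by ring]
        exact norm_sub_le _ _
      have h5 : ‖(2:ℂ)‖ = 2 := by norm_num
      linarith
    calc ‖ρ ω - 1‖ = ‖ρ ω - 1‖ * 1 := by ring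
    _ ≤ ‖ρ ω - 1‖ * ‖ρ ω + 1‖ := by
        exact mul_le_mul_of_nonneg_left hge (norm_nonneg _)
    _ = ‖w ω‖ := by rw [← norm_mul, hfac]
  -- Step 5 : d → 0
  have hd : Tendsto d atTop (𝓝 0) := by
    rw [tendsto_zero_iff_norm_tendsto_zero]
    apply squeeze_zero' (by filter_upwards with ω using norm_nonneg _)
      (g := fun ω => c * (|ω| * ‖w ω‖))
    · filter_upwards [hρ1] with ω h1
      have : ‖d ω‖ = ‖ρ ω - 1‖ * (|ω| * c) := by
        rw [hddef]
        simp only [norm_mul, hσdef]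
        rw [Complex.norm_real, Real.norm_eq_abs, abs_mul, abs_of_pos hc]
      rw [this]
      calc ‖ρ ω - 1‖ * (|ω| * c) ≤ ‖w ω‖ * (|ω| * c) := by
            apply mul_le_mul_of_nonneg_right h1 (by positivity)
      _ = c * (|ω| * ‖w ω‖) := by ring
    · simpa using hww.const_mul c
  -- Step 6 : m → 1
  have hm : Tendsto m atTop (𝓝 1) := by
    have hnum : Tendsto (fun ω => 1 + ρ ω ^ 2) atTop (𝓝 2) := by
      have := (hρ.pow 2).const_add (1:ℂ)
      norm_num at this
      exact this
    have hden : Tendsto (fun ω => 2 * ρ ω) atTop (𝓝 2) := by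
      have := hρ.const_mul (2:ℂ)
      simpa using this
    have := hnum.div hden (by norm_num)
    rw [div_self (two_ne_zero' ℂ)] at this
    exact this
  -- Step 7 : the algebraic identity for E
  have hEid : ∀ ω : ℝ, E ω =
      Complex.cos (σ ω)^2 * (Complex.cos (d ω) - 1)
      - (1 + m ω) * (Complex.sin (σ ω) * Complex.cos (σ ω)) * Complex.sin (d ω)
      + Complex.sin (σ ω)^2 * (1 - m ω * Complex.cos (d ω)) := by
    intro ω
    have harg : ρ ω * σ ω = σ ω + d ω := by rw [hddef]; ring
    rw [hEdef]
    show dispersionRHS α β γ ε₀ μ₀ ω - Complex.cos (2 * σ ω) = _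
    rw [dispersionRHS]
    show Complex.cos (σ ω) * Complex.cos (ρ ω * σ ω) -
        m ω * (Complex.sin (σ ω) * Complex.sin (ρ ω * σ ω)) - Complex.cos (2 * σ ω) = _
    rw [harg, Complex.cos_add, Complex.sin_add, Complex.cos_two_mul]
    linear_combination -Complex.sin_sq_add_cos_sq (σ ω)
  -- Step 8 : the majorant G and its limit
  set G : ℝ → ℝ := fun ω => ‖Complex.cos (d ω) - 1‖ + ‖1 + m ω‖ * ‖Complex.sin (d ω)‖
      + ‖1 - m ω * Complex.cos (d ω)‖ with hGdef
  have hcosd : Tendsto (fun ω => Complex.cos (d ω)) atTop (𝓝 1) := by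
    have := (Complex.continuous_cos.tendsto (0:ℂ)).comp hd
    rw [Complex.cos_zero] at this
    exact this
  have hsind : Tendsto (fun ω => Complex.sin (d ω)) atTop (𝓝 0) := by
    have := (Complex.continuous_sin.tendsto (0:ℂ)).comp hd
    rw [Complex.sin_zero] at this
    exact this
  have hG : Tendsto G atTop (𝓝 0) := by
    have t1 : Tendsto (fun ω => ‖Complex.cos (d ω) - 1‖) atTop (𝓝 0) := by
      have := (hcosd.sub_const 1).norm
      simpa using this
    have t2 : Tendsto (fun ω => ‖1 + m ω‖ * ‖Complex.sin (d ω)‖) atTop (𝓝 0) := by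
      have h2 : Tendsto (fun ω => ‖1 + m ω‖) atTop (𝓝 ‖(1:ℂ) + 1‖) := (hm.const_add 1).norm
      have h3 : Tendsto (fun ω => ‖Complex.sin (d ω)‖) atTop (𝓝 0) := by
        simpa using hsind.norm
      simpa using h2.mul h3
    have t3 : Tendsto (fun ω => ‖1 - m ω * Complex.cos (d ω)‖) atTop (𝓝 0) := by
      have h2 : Tendsto (fun ω => 1 - m ω * Complex.cos (d ω)) atTop (𝓝 (1 - 1*1)) :=
        tendsto_const_nhds.sub (hm.mul hcosd)
      norm_num at h2
      simpa using h2.norm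
    have := (t1.add t2).add t3
    simpa [hGdef] using this
  -- Step 9 : ‖E‖ ≤ G
  have hEG : ∀ ω : ℝ, ‖E ω‖ ≤ G ω := by
    intro ω
    have hcs : ‖Complex.cos (σ ω)‖ ≤ 1 := by
      rw [hσdef]
      show ‖Complex.cos ((ω*c : ℝ) : ℂ)‖ ≤ 1
      rw [← Complex.ofReal_cos, Complex.norm_real, Real.norm_eq_abs]
      exact Real.abs_cos_le_one _
    have hss : ‖Complex.sin (σ ω)‖ ≤ 1 := by
      rw [hσdef]
      show ‖Complex.sin ((ω*c : ℝ) : ℂ)‖ ≤ 1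
      rw [← Complex.ofReal_sin, Complex.norm_real, Real.norm_eq_abs]
      exact Real.abs_sin_le_one _
    rw [hEid ω]
    show _ ≤ ‖Complex.cos (d ω) - 1‖ + ‖1 + m ω‖ * ‖Complex.sin (d ω)‖
      + ‖1 - m ω * Complex.cos (d ω)‖
    set A := Complex.cos (σ ω)^2 * (Complex.cos (d ω) - 1)
    set B := (1 + m ω) * (Complex.sin (σ ω) * Complex.cos (σ ω)) * Complex.sin (d ω)
    set Cc := Complex.sin (σ ω)^2 * (1 - m ω * Complex.cos (d ω))
    have tri : ‖A - B + Cc‖ ≤ ‖A‖ + ‖B‖ + ‖Cc‖ := by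
      calc ‖A - B + Cc‖ ≤ ‖A - B‖ + ‖Cc‖ := norm_add_le _ _
      _ ≤ ‖A‖ + ‖B‖ + ‖Cc‖ := by linarith [norm_sub_le A B]
    have bA : ‖A‖ ≤ ‖Complex.cos (d ω) - 1‖ := by
      rw [norm_mul, norm_pow]
      exact mul_le_of_le_one_left (norm_nonneg _) (pow_le_one₀ (norm_nonneg _) hcs)
    have bB : ‖B‖ ≤ ‖1 + m ω‖ * ‖Complex.sin (d ω)‖ := by
      rw [norm_mul, norm_mul, norm_mul]
      have h1 : ‖Complex.sin (σ ω)‖ * ‖Complex.cos (σ ω)‖ ≤ 1 :=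
        mul_le_one₀ hss (norm_nonneg _) hcs
      calc ‖1 + m ω‖ * (‖Complex.sin (σ ω)‖ * ‖Complex.cos (σ ω)‖) * ‖Complex.sin (d ω)‖
          ≤ ‖1 + m ω‖ * 1 * ‖Complex.sin (d ω)‖ := by
            apply mul_le_mul_of_nonneg_right _ (norm_nonneg _)
            exact mul_le_mul_of_nonneg_left h1 (norm_nonneg _)
      _ = ‖1 + m ω‖ * ‖Complex.sin (d ω)‖ := by ring
    have bC : ‖Cc‖ ≤ ‖1 - m ω * Complex.cos (d ω)‖ := by
      rw [norm_mul, norm_pow]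
      exact mul_le_of_le_one_left (norm_nonneg _) (pow_le_one₀ (norm_nonneg _) hss)
    linarith
  -- ‖E‖ → 0
  have hEn : Tendsto (fun ω => ‖E ω‖) atTop (𝓝 0) :=
    squeeze_zero (fun ω => norm_nonneg _) hEG hG
  -- Step 11 : pointwise bound on Im κ
  have hkey : ∀ ω : ℝ, (κ ω).im ^ 2 ≤ (3 * ‖E ω‖ + ‖E ω‖^2) / 4 := by
    intro ω
    have hC0 : Complex.cos (2 * σ ω) = ((Real.cos (2 * (ω * c)) : ℝ) : ℂ) := by
      rw [hσdef]
      show Complex.cos (2 * ((ω*c : ℝ) : ℂ)) = _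
      rw [Complex.ofReal_cos]
      norm_num
    have hsum : Complex.cos (2 * κ ω) = Complex.cos (2 * σ ω) + E ω := by
      rw [hκ ω, hEdef]; ring
    have him : |(Complex.cos (2 * κ ω)).im| ≤ ‖E ω‖ := by
      rw [hsum, Complex.add_im, hC0, Complex.ofReal_im, zero_add]
      simpa using Complex.abs_im_le_norm (E ω)
    have hn : ‖Complex.cos (2 * κ ω)‖ ≤ 1 + ‖E ω‖ := by
      rw [hsum]
      calc ‖Complex.cos (2 * σ ω) + E ω‖
          ≤ ‖Complex.cos (2 * σ ω)‖ + ‖E ω‖ := norm_add_le _ _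
      _ ≤ 1 + ‖E ω‖ := by
          rw [hC0, Complex.norm_real, Real.norm_eq_abs]
          exact add_le_add_left (Real.abs_cos_le_one _) _
    have := aux_sinh_sq_le (2 * κ ω) (‖E ω‖) (norm_nonneg _) him hn
    have him2 : (2 * κ ω).im = 2 * (κ ω).im := by simp
    rw [him2] at this
    nlinarith [this]
  -- Step 12 : Im κ ^ 2 → 0
  have hsq0 : Tendsto (fun ω => (κ ω).im ^ 2) atTop (𝓝 0) := by
    apply squeeze_zero (fun ω => sq_nonneg _) hkey
    have : Tendsto (fun ω => (3 * ‖E ω‖ + ‖E ω‖^2) / 4) atTop (𝓝 ((3 * 0 + 0^2)/4)) :=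
      ((hEn.const_mul 3).add (hEn.pow 2)).div_const 4
    norm_num at this
    exact this
  -- Step 13 : conclude
  have habs : Tendsto (fun ω => |(κ ω).im|) atTop (𝓝 0) := by
    have := (Real.continuous_sqrt.tendsto 0).comp hsq0
    rw [Real.sqrt_zero] at this
    exact this.congr fun ω => Real.sqrt_sq_eq_abs _
  rw [tendsto_zero_iff_norm_tendsto_zero]
  simpa [Real.norm_eq_abs] using habs
end
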